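/- The functional Tr is a tracial, factorizing, reflection-invariant state: (a) Tr(1) = 1; (b) Tr(A*A) ≥ 0 for all A ∈ 𝔄, with equality only for A = 0; (c) Tr(AB) = Tr(BA) for all A, B ∈ 𝔄; (d) Tr(Θ(A)) = conj(Tr(A)) for all A ∈ 𝔄; (e) Tr(A₋·A₊) = Tr(A₋)·Tr(A₊) for all A₋ ∈ 𝔄₋ and A₊ ∈ 𝔄₊. -/

import Mathlib

open ComplexOrder

noncomputable section

/-- The setting of the paper: a finite set `Λ` with a fixed-point free involution `ϑ`
exchanging `Λp` and its complement, the Clifford algebra (algebra of Majoranas) `carrier`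
with self-adjoint generators `c i`, the global gauge automorphism `gauge`, the antilinear
reflection `*`-automorphism `Θ`, a square root `ζ` of `-1`, the twisted product `twist`,
a choice `P` of orderings of the subsets of `Λp` (giving the bases
`{C J : J ∈ P}` of `𝔄₊` and `{Θ(C J) ∘ C J' : J, J' ∈ P}` of `𝔄`),
and the tracial state `Tr` picking out the coefficient of `1` in the basis expansion. -/
structure MajoranaSetting where
  Λ : Type
  [fintypeΛ : Fintype Λ]
  [deceqΛ : DecidableEq Λ]
  ϑ : Λ → Λ
  ϑ_invol : Function.Involutive ϑ
  ϑ_fixfree : ∀ i, ϑ i ≠ i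
  Λp : Finset Λ
  ϑ_exch : ∀ i, i ∈ Λp ↔ ϑ i ∉ Λp
  carrier : Type
  [nring : NormedRing carrier]
  [nalg : NormedAlgebra ℂ carrier]
  [cmpl : CompleteSpace carrier]
  [starring : StarRing carrier]
  [starmod : StarModule ℂ carrier]
  c : Λ → carrier
  c_star : ∀ i, star (c i) = c i
  clifford : ∀ i j, c i * c j + c j * c i = if i = j then (2 : carrier) else 0
  gauge : carrier ≃ₐ[ℂ] carrier
  gauge_c : ∀ i, gauge (c i) = - c i
  Θ : carrier → carrier
  Θ_add : ∀ x y, Θ (x + y) = Θ x + Θ y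
  Θ_smul : ∀ (z : ℂ) (x), Θ (z • x) = (starRingEnd ℂ z) • Θ x
  Θ_mul : ∀ x y, Θ (x * y) = Θ x * Θ y
  Θ_star : ∀ x, Θ (star x) = star (Θ x)
  Θ_invol : ∀ x, Θ (Θ x) = x
  Θ_c : ∀ i, Θ (c i) = c (ϑ i)
  ζ : ℂ
  ζ_sq : ζ ^ 2 = -1
  twist : carrier → carrier → carrier
  twist_add_left : ∀ x x' y, twist (x + x') y = twist x y + twist x' y
  twist_add_right : ∀ x y y', twist x (y + y') = twist x y + twist x y'
  twist_smul_left : ∀ (z : ℂ) (x y), twist (z • x) y = z • twist x y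
  twist_smul_right : ∀ (z : ℂ) (x y), twist x (z • y) = z • twist x y
  twist_spec : ∀ (Am Ap Bm Bp : carrier) (a b a' b' : ℕ),
    a ≤ 1 → b ≤ 1 → a' ≤ 1 → b' ≤ 1 →
    Am ∈ Algebra.adjoin ℂ (c '' {i | i ∉ Λp}) →
    Ap ∈ Algebra.adjoin ℂ (c '' {i | i ∈ Λp}) →
    Bm ∈ Algebra.adjoin ℂ (c '' {i | i ∉ Λp}) →
    Bp ∈ Algebra.adjoin ℂ (c '' {i | i ∈ Λp}) →
    gauge Am = ((-1 : ℂ) ^ a) • Am →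
    gauge Ap = ((-1 : ℂ) ^ b) • Ap →
    gauge Bm = ((-1 : ℂ) ^ a') • Bm →
    gauge Bp = ((-1 : ℂ) ^ b') • Bp →
    twist (Am * Ap) (Bm * Bp)
      = ζ ^ ((a * b' : ℤ) - (b * a' : ℤ)) • (Am * Ap * (Bm * Bp))
  P : Finset (List Λ)
  P_nodup : ∀ J ∈ P, J.Nodup
  P_sub : ∀ J ∈ P, ∀ i ∈ J, i ∈ Λp
  P_unique : ∀ s : Finset Λ, s ⊆ Λp → ∃! J, J ∈ P ∧ J.toFinset = s
  Tr : carrier →ₗ[ℂ] ℂ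
  Tr_basis : ∀ J ∈ P, ∀ J' ∈ P,
    Tr (twist (Θ ((J.map c).prod)) ((J'.map c).prod))
      = if J = [] ∧ J' = [] then 1 else 0
  basis_indep : LinearIndependent ℂ
    (fun p : {J // J ∈ P} × {J // J ∈ P} =>
      twist (Θ ((p.1.1.map c).prod)) ((p.2.1.map c).prod))
  basis_span : ∀ x : carrier, x ∈ Submodule.span ℂ
    (Set.range fun p : {J // J ∈ P} × {J // J ∈ P} =>
      twist (Θ ((p.1.1.map c).prod)) ((p.2.1.map c).prod))
  plus_span : ∀ x ∈ Algebra.adjoin ℂ (c '' {i | i ∈ Λp}),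
    x ∈ Submodule.span ℂ (Set.range fun J : {J // J ∈ P} => ((J.1.map c).prod))

attribute [instance] MajoranaSetting.fintypeΛ MajoranaSetting.deceqΛ
  MajoranaSetting.nring MajoranaSetting.nalg MajoranaSetting.cmpl
  MajoranaSetting.starring MajoranaSetting.starmod

namespace MajoranaSetting

variable (S : MajoranaSetting)

/-- The subalgebra `𝔄₊` generated by the Majoranas on the `+` side. -/
def Aplus : Subalgebra ℂ S.carrier := Algebra.adjoin ℂ (S.c '' {i | i ∈ S.Λp})

/-- The subalgebra `𝔄₋` generated by the Majoranas on the `-` side. -/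
def Aminus : Subalgebra ℂ S.carrier := Algebra.adjoin ℂ (S.c '' {i | i ∉ S.Λp})

/-- The monomial `C_𝔍 = c_{i₁} ⋯ c_{i_k}`. -/
def C (J : List S.Λ) : S.carrier := (J.map S.c).prod

/-- `q_𝔍 = (-1)^{k(k-1)/2}`. -/
def q (J : List S.Λ) : ℂ := (-1 : ℂ) ^ (J.length * (J.length - 1) / 2)

/-- `s_𝔍 = ζ^{k(k-1)/2}`. -/
def sgn (J : List S.Λ) : ℂ := S.ζ ^ (J.length * (J.length - 1) / 2)

/-- The exponential `e^x` in the (finite-dimensional) algebra `𝔄`. -/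
def expm (x : S.carrier) : S.carrier := NormedSpace.exp x

/-- The Hamiltonian `H = -∑_{𝔍,𝔍' ∈ 𝒫₊} J_{𝔍𝔍'} Θ(C_𝔍) ∘ C_𝔍'`
determined by coupling constants `Jc`. -/
def Ham (Jc : List S.Λ → List S.Λ → ℂ) : S.carrier :=
  - ∑ J ∈ S.P, ∑ J' ∈ S.P, Jc J J' • S.twist (S.Θ (S.C J)) (S.C J')

/-- The index type of the basis `{C J : J ∈ 𝒫₊}`. -/
abbrev PIdx := {J : List S.Λ // J ∈ S.P}

/-- The index type `𝒫₊ - {∅}` of couplings across the reflection plane. -/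
abbrev PIdx0 := {p : S.PIdx // p.1 ≠ []}

/-- The full matrix of coupling constants. -/
def Jmat (Jc : List S.Λ → List S.Λ → ℂ) : Matrix S.PIdx S.PIdx ℂ :=
  Matrix.of fun p q => Jc p.1 q.1

/-- The matrix `J⁰` of coupling constants across the reflection plane. -/
def Jmat0 (Jc : List S.Λ → List S.Λ → ℂ) : Matrix S.PIdx0 S.PIdx0 ℂ :=
  Matrix.of fun p q => Jc p.1.1 q.1.1

end MajoranaSetting

/-!
Write `C X` for the product of the Majoranas along a word `X`. The basis element
`Θ(C_𝔍) ∘ C_𝔍'` is a unimodular multiple of `C (ϑ𝔍 ++ 𝔍')`, and every word without repeated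
letters is a permutation of exactly one such `ϑ𝔍 ++ 𝔍'`; so `Tr` vanishes on all nonempty
reduced words, and is therefore invariant under any linear map fixing `1` that scales each
reduced word: the gauge automorphism and conjugation by a Majorana `c i`. Conjugation invariance
gives traciality. Applied to an arbitrary word `W`, the two invariances multiply `Tr (C W)` by
`(-1)^|W|` and `(-1)^(|W| + count i W)`, so `Tr (C W) = 0` as soon as some letter occurs an odd
number of times; this makes the basis orthonormal for `(A, B) ↦ Tr (A⋆ B)`, whence positivity
and faithfulness. Reflection invariance and factorization are checked on monomials, using that
`Θ` carries `𝔄₋` into `𝔄₊`.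
-/

section Orthonormal

variable {ι A : Type*} [Fintype ι] [DecidableEq ι] [Ring A] [StarRing A] [Algebra ℂ A]
  [StarModule ℂ A]

theorem apply_star_mul_self_eq_sum_normSq (φ : A →ₗ[ℂ] ℂ) (E : ι → A)
    (horth : ∀ p q, φ (star (E p) * E q) = if p = q then 1 else 0) (r : ι → ℂ) :
    φ (star (∑ p, r p • E p) * ∑ p, r p • E p) = ((∑ p, Complex.normSq (r p) : ℝ) : ℂ) := by
  simp only [star_sum, star_smul, Finset.sum_mul_sum, smul_mul_smul_comm, map_sum, map_smul,
    horth, smul_eq_mul, mul_ite, mul_one, mul_zero, Finset.sum_ite_eq, Finset.mem_univ, if_true]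
  push_cast
  refine Finset.sum_congr rfl fun p _ => ?_
  rw [Complex.normSq_eq_conj_mul_self]
  rfl

theorem nonneg_and_faithful_of_orthonormal (φ : A →ₗ[ℂ] ℂ) (E : ι → A)
    (hspan : ∀ x, x ∈ Submodule.span ℂ (Set.range E))
    (horth : ∀ p q, φ (star (E p) * E q) = if p = q then 1 else 0) (x : A) :
    0 ≤ φ (star x * x) ∧ (φ (star x * x) = 0 → x = 0) := by
  obtain ⟨r, rfl⟩ := Submodule.mem_span_range_iff_exists_fun ℂ |>.mp (hspan x)
  rw [apply_star_mul_self_eq_sum_normSq φ E horth, Complex.ofReal_eq_zero,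
    Finset.sum_eq_zero_iff_of_nonneg fun p _ => Complex.normSq_nonneg _]
  refine ⟨Complex.zero_le_real.mpr (Finset.sum_nonneg fun p _ => Complex.normSq_nonneg _),
    fun h => Finset.sum_eq_zero fun p _ => ?_⟩
  rw [Complex.normSq_eq_zero.mp (h p (Finset.mem_univ p)), zero_smul]

end Orthonormal

lemma List.odd_count_append_of_nodup {α : Type*} [DecidableEq α] {X Y : List α} {a : α}
    (hX : X.Nodup) (hY : Y.Nodup) (h : ¬(a ∈ X ↔ a ∈ Y)) : Odd ((X ++ Y).count a) := by
  rw [List.count_append]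
  by_cases hx : a ∈ X
  · rw [List.count_eq_one_of_mem hX hx,
      List.count_eq_zero_of_not_mem fun hy => h (iff_of_true hx hy)]
    exact odd_one
  · rw [List.count_eq_zero_of_not_mem hx, List.count_eq_one_of_mem hY (by tauto)]
    exact odd_one

namespace MajoranaSetting

variable (S : MajoranaSetting)

@[simp]
lemma C_nil : S.C [] = 1 := rfl

@[simp]
lemma C_cons (i : S.Λ) (X : List S.Λ) : S.C (i :: X) = S.c i * S.C X := List.prod_cons

lemma C_append (X Y : List S.Λ) : S.C (X ++ Y) = S.C X * S.C Y := by
  simp [C, List.prod_append]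

@[simp]
lemma c_mul_self (i : S.Λ) : S.c i * S.c i = 1 := by
  have h : (2 : ℂ) • (S.c i * S.c i) = (2 : ℂ) • 1 := by
    rw [two_smul, two_smul, S.clifford, if_pos rfl, one_add_one_eq_two]
  exact smul_right_injective S.carrier two_ne_zero h

lemma c_mul_c_of_ne {i j : S.Λ} (h : i ≠ j) : S.c i * S.c j = -(S.c j * S.c i) :=
  eq_neg_of_add_eq_zero_left ((S.clifford i j).trans (if_neg h))

lemma c_mul_C (i : S.Λ) (X : List S.Λ) :
    S.c i * S.C X = (-1 : ℂ) ^ (X.length + X.count i) • (S.C X * S.c i) := by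
  induction X with
  | nil => simp
  | cons j X ih =>
    by_cases h : i = j
    · subst h
      conv_rhs => rw [C_cons, ih]
      rw [C_cons, ← mul_assoc, c_mul_self, one_mul, smul_mul_assoc, mul_assoc,
        c_mul_self, mul_one, smul_smul, ← pow_add, List.length_cons, List.count_cons_self,
        Even.neg_one_pow ⟨X.length + X.count i + 1, by ring⟩, one_smul]
    · rw [C_cons, ← mul_assoc, S.c_mul_c_of_ne h, neg_mul, mul_assoc, ih, List.length_cons,
        List.count_cons_of_ne (Ne.symm h), add_right_comm, pow_succ, mul_neg_one, neg_smul,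
        mul_smul_comm, mul_assoc]

lemma C_perm {X Y : List S.Λ} (h : X.Perm Y) : ∃ n : ℕ, S.C X = (-1 : ℂ) ^ n • S.C Y := by
  induction h with
  | nil => exact ⟨0, by simp⟩
  | cons i _ ih =>
    obtain ⟨n, hn⟩ := ih
    exact ⟨n, by rw [C_cons, C_cons, hn, mul_smul_comm]⟩
  | swap i j X =>
    refine ⟨1 + List.count j [i], ?_⟩
    have := S.c_mul_C j [i]
    simp only [C_cons, C_nil, mul_one, List.length_singleton] at this ⊢
    rw [← mul_assoc, this, smul_mul_assoc, mul_assoc]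
  | trans _ _ ih₁ ih₂ =>
    obtain ⟨m, hm⟩ := ih₁
    obtain ⟨n, hn⟩ := ih₂
    exact ⟨m + n, by rw [hm, hn, smul_smul, pow_add]⟩

lemma star_C (X : List S.Λ) : star (S.C X) = S.C X.reverse := by
  induction X with
  | nil => simp
  | cons i X ih => simp [star_mul, ih, S.c_star, C_append]

@[simp]
lemma star_C_mul_C (X : List S.Λ) : star (S.C X) * S.C X = 1 := by
  induction X with
  | nil => simp
  | cons i X ih =>
    rw [C_cons, star_mul, mul_assoc, ← mul_assoc (star (S.c i)), S.c_star, c_mul_self, one_mul,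
      ih]

lemma Θ_one : S.Θ 1 = 1 := by
  simpa [S.Θ_invol] using (S.Θ_mul (S.Θ 1) 1).symm

lemma Θ_C (X : List S.Λ) : S.Θ (S.C X) = S.C (X.map S.ϑ) := by
  induction X with
  | nil => exact S.Θ_one
  | cons i X ih => simp [S.Θ_mul, S.Θ_c, ih]

lemma gauge_C (X : List S.Λ) : S.gauge (S.C X) = (-1 : ℂ) ^ X.length • S.C X := by
  induction X with
  | nil => simp
  | cons i X ih => simp [S.gauge_c, ih, pow_succ']

lemma C_mem_adjoin {s : Set S.Λ} {X : List S.Λ} (h : ∀ i ∈ X, i ∈ s) :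
    S.C X ∈ Algebra.adjoin ℂ (S.c '' s) :=
  Subalgebra.list_prod_mem _ fun _ hx =>
    let ⟨i, hi, e⟩ := List.mem_map.mp hx
    Algebra.subset_adjoin ⟨i, h i hi, e⟩

lemma norm_ζ : ‖S.ζ‖ = 1 := by
  have h : ‖S.ζ‖ ^ 2 = 1 := by rw [← norm_pow, S.ζ_sq, norm_neg, norm_one]
  exact (pow_eq_one_iff_of_nonneg (norm_nonneg _) two_ne_zero).mp h

lemma ϑ_mem_Λp_iff (i : S.Λ) : S.ϑ i ∈ S.Λp ↔ i ∉ S.Λp := by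
  rw [S.ϑ_exch, S.ϑ_invol]

lemma not_mem_Λp_of_mem_map {J : List S.Λ} (hJ : ∀ i ∈ J, i ∈ S.Λp) :
    ∀ i ∈ J.map S.ϑ, i ∉ S.Λp := by
  simp only [List.mem_map, forall_exists_index, and_imp, forall_apply_eq_imp_iff₂]
  exact fun j hj => (S.ϑ_exch j).mp (hJ j hj)

lemma twist_Θ_C {J J' : List S.Λ} (hJ : ∀ i ∈ J, i ∈ S.Λp) (hJ' : ∀ i ∈ J', i ∈ S.Λp) :
    S.twist (S.Θ (S.C J)) (S.C J') =
      S.ζ ^ (J.length % 2 * (J'.length % 2)) • S.C (J.map S.ϑ ++ J') := by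
  have hm := S.not_mem_Λp_of_mem_map hJ
  have h := S.twist_spec (S.C (J.map S.ϑ)) 1 1 (S.C J') (J.length % 2) 0 0 (J'.length % 2)
    (by omega) zero_le_one zero_le_one (by omega) (S.C_mem_adjoin hm) (one_mem _) (one_mem _)
    (S.C_mem_adjoin hJ')
    (by rw [S.gauge_C, List.length_map, ← neg_one_pow_eq_pow_mod_two]) (by simp) (by simp)
    (by rw [S.gauge_C, ← neg_one_pow_eq_pow_mod_two])
  simp only [mul_one, one_mul, CharP.cast_eq_zero, zero_mul, sub_zero] at h
  rw [Θ_C, h, C_append, ← Nat.cast_mul, zpow_natCast]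

lemma nil_mem_P : [] ∈ S.P := by
  obtain ⟨J, ⟨hJ, hJnil⟩, -⟩ := S.P_unique ∅ (Finset.empty_subset _)
  rwa [(List.toFinset_eq_empty_iff J).mp hJnil] at hJ

lemma P_eq_of_toFinset_eq {J K : List S.Λ} (hJ : J ∈ S.P) (hK : K ∈ S.P)
    (h : J.toFinset = K.toFinset) : J = K := by
  obtain ⟨L, -, hL⟩ := S.P_unique K.toFinset fun i hi => S.P_sub K hK i (List.mem_toFinset.mp hi)
  rw [hL J ⟨hJ, h⟩, hL K ⟨hK, rfl⟩]

lemma exists_mem_P_perm {X : List S.Λ} (hX : X.Nodup) (h : ∀ i ∈ X, i ∈ S.Λp) :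
    ∃ J ∈ S.P, J.Perm X := by
  obtain ⟨J, ⟨hJ, hJX⟩, -⟩ := S.P_unique X.toFinset fun i hi => h i (List.mem_toFinset.mp hi)
  exact ⟨J, hJ, List.perm_of_nodup_nodup_toFinset_eq (S.P_nodup J hJ) hX hJX⟩

lemma filter_map_append {J J' : List S.Λ} (hJ : J ∈ S.P) (hJ' : J' ∈ S.P) :
    (J.map S.ϑ ++ J').filter (· ∈ S.Λp) = J' ∧
      (J.map S.ϑ ++ J').filter (· ∉ S.Λp) = J.map S.ϑ := by
  have hm := S.not_mem_Λp_of_mem_map (S.P_sub J hJ)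
  constructor
  · rw [List.filter_append, List.filter_eq_nil_iff.mpr (by simpa using hm),
      List.filter_eq_self.mpr (by simpa using S.P_sub J' hJ'), List.nil_append]
  · rw [List.filter_append, List.filter_eq_self.mpr (by simpa using hm),
      List.filter_eq_nil_iff.mpr (by simpa using S.P_sub J' hJ'), List.append_nil]

lemma nodup_map_append {J J' : List S.Λ} (hJ : J ∈ S.P) (hJ' : J' ∈ S.P) :
    (J.map S.ϑ ++ J').Nodup :=
  ((S.P_nodup J hJ).map S.ϑ_invol.injective).append (S.P_nodup J' hJ') fun i hi hi' =>
    S.not_mem_Λp_of_mem_map (S.P_sub J hJ) i hi (S.P_sub J' hJ' i hi')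

lemma eq_of_toFinset_map_append_eq {J J' K K' : List S.Λ} (hJ : J ∈ S.P) (hJ' : J' ∈ S.P)
    (hK : K ∈ S.P) (hK' : K' ∈ S.P)
    (h : (J.map S.ϑ ++ J').toFinset = (K.map S.ϑ ++ K').toFinset) : J = K ∧ J' = K' := by
  obtain ⟨hJ'f, hJf⟩ := S.filter_map_append hJ hJ'
  obtain ⟨hK'f, hKf⟩ := S.filter_map_append hK hK'
  refine ⟨S.P_eq_of_toFinset_eq hJ hK ?_, S.P_eq_of_toFinset_eq hJ' hK' ?_⟩
  · have hϑ : (J.map S.ϑ).toFinset = (K.map S.ϑ).toFinset := by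
      rw [← hJf, ← hKf, List.toFinset_filter, List.toFinset_filter, h]
    ext i
    rw [List.mem_toFinset, List.mem_toFinset, ← List.mem_map_of_injective S.ϑ_invol.injective,
      ← List.mem_toFinset, hϑ, List.mem_toFinset, List.mem_map_of_injective S.ϑ_invol.injective]
  · rw [← hJ'f, ← hK'f, List.toFinset_filter, List.toFinset_filter, h]

lemma exists_perm_map_append {X : List S.Λ} (hX : X.Nodup) :
    ∃ J ∈ S.P, ∃ J' ∈ S.P, (J.map S.ϑ ++ J').Perm X := by
  obtain ⟨J, hJ, hJX⟩ := S.exists_mem_P_perm ((hX.filter _).map S.ϑ_invol.injective)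
    (X := (X.filter (· ∉ S.Λp)).map S.ϑ) fun _ hi =>
      let ⟨i, hi, e⟩ := List.mem_map.mp hi
      e ▸ (S.ϑ_mem_Λp_iff i).mpr (by simpa using (List.mem_filter.mp hi).2)
  obtain ⟨J', hJ', hJ'X⟩ := S.exists_mem_P_perm (hX.filter (· ∈ S.Λp))
    fun i hi => by simpa using (List.mem_filter.mp hi).2
  refine ⟨J, hJ, J', hJ', ?_⟩
  have hϑJ : (J.map S.ϑ).Perm (X.filter (· ∉ S.Λp)) := by
    simpa [List.map_map, S.ϑ_invol.comp_self] using hJX.map S.ϑ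
  exact (hϑJ.append hJ'X).trans <| List.perm_append_comm.trans <| by
    simpa using List.filter_append_perm (· ∈ S.Λp) X

lemma ζ_ne_zero : S.ζ ≠ 0 :=
  norm_ne_zero_iff.mp (S.norm_ζ ▸ one_ne_zero)

lemma Tr_C_map_append {J J' : List S.Λ} (hJ : J ∈ S.P) (hJ' : J' ∈ S.P) :
    S.Tr (S.C (J.map S.ϑ ++ J')) = if J = [] ∧ J' = [] then 1 else 0 := by
  have h := S.Tr_basis J hJ J' hJ'
  change S.Tr (S.twist (S.Θ (S.C J)) (S.C J')) = _ at h
  rw [S.twist_Θ_C (S.P_sub J hJ) (S.P_sub J' hJ'), map_smul, smul_eq_mul] at h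
  split_ifs at h ⊢ with hnil
  · obtain ⟨rfl, rfl⟩ := hnil
    simpa using h
  · exact (mul_eq_zero.mp h).resolve_left (pow_ne_zero _ S.ζ_ne_zero)

lemma Tr_one : S.Tr 1 = 1 := by
  simpa using S.Tr_C_map_append S.nil_mem_P S.nil_mem_P

lemma Tr_C_of_nodup {X : List S.Λ} (hX : X.Nodup) :
    S.Tr (S.C X) = if X = [] then 1 else 0 := by
  rcases eq_or_ne X [] with rfl | hne
  · simpa using S.Tr_one
  obtain ⟨J, hJ, J', hJ', hperm⟩ := S.exists_perm_map_append hX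
  obtain ⟨n, hn⟩ := S.C_perm hperm.symm
  have hJJ' : ¬(J = [] ∧ J' = []) := by
    rintro ⟨rfl, rfl⟩
    exact hne (List.nil_perm.mp hperm)
  rw [if_neg hne, hn, map_smul, S.Tr_C_map_append hJ hJ', if_neg hJJ', smul_zero]

lemma span_C_nodup : Submodule.span ℂ (S.C '' {X | X.Nodup}) = ⊤ := by
  refine eq_top_iff.mpr fun x _ => Submodule.span_le.mpr ?_ (S.basis_span x)
  rintro _ ⟨⟨⟨J, hJ⟩, ⟨J', hJ'⟩⟩, rfl⟩
  change S.twist (S.Θ (S.C J)) (S.C J') ∈ _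
  rw [S.twist_Θ_C (S.P_sub J hJ) (S.P_sub J' hJ')]
  exact Submodule.smul_mem _ _ (Submodule.subset_span ⟨_, S.nodup_map_append hJ hJ', rfl⟩)

lemma Tr_apply_eq_of_diagonal (f : S.carrier →ₗ[ℂ] S.carrier) (h1 : f 1 = 1)
    (hC : ∀ X, X.Nodup → ∃ z : ℂ, f (S.C X) = z • S.C X) (x : S.carrier) :
    S.Tr (f x) = S.Tr x := by
  suffices S.Tr ∘ₗ f = S.Tr from LinearMap.congr_fun this x
  refine LinearMap.ext_on S.span_C_nodup ?_
  rintro _ ⟨X, hX, rfl⟩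
  rcases eq_or_ne X [] with rfl | hne
  · simp [h1]
  obtain ⟨z, hz⟩ := hC X hX
  simp [hz, S.Tr_C_of_nodup hX, hne]

lemma Tr_gauge (x : S.carrier) : S.Tr (S.gauge x) = S.Tr x :=
  S.Tr_apply_eq_of_diagonal S.gauge.toLinearMap (map_one S.gauge) (fun X _ => ⟨_, S.gauge_C X⟩) x

lemma Tr_c_mul_mul_c (i : S.Λ) (x : S.carrier) : S.Tr (S.c i * x * S.c i) = S.Tr x := by
  have h := S.Tr_apply_eq_of_diagonal
    (LinearMap.mulLeft ℂ (S.c i) ∘ₗ LinearMap.mulRight ℂ (S.c i)) (by simp)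
    (fun X _ => ⟨(-1) ^ (X.length + X.count i),
      by simp [← mul_assoc, S.c_mul_C i X, mul_assoc (S.C X)]⟩) x
  simpa [mul_assoc] using h

lemma Tr_c_mul_comm (i : S.Λ) (x : S.carrier) : S.Tr (S.c i * x) = S.Tr (x * S.c i) := by
  simpa [mul_assoc] using S.Tr_c_mul_mul_c i (x * S.c i)

lemma Tr_mul_C_comm (X : List S.Λ) (x : S.carrier) : S.Tr (x * S.C X) = S.Tr (S.C X * x) := by
  induction X generalizing x with
  | nil => simp
  | cons i X ih =>
    rw [C_cons, ← mul_assoc, ih, ← mul_assoc, ← Tr_c_mul_comm, mul_assoc]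

lemma Tr_mul_comm (x y : S.carrier) : S.Tr (x * y) = S.Tr (y * x) := by
  suffices S.Tr ∘ₗ LinearMap.mulLeft ℂ x = S.Tr ∘ₗ LinearMap.mulRight ℂ x from
    LinearMap.congr_fun this y
  refine LinearMap.ext_on S.span_C_nodup ?_
  rintro _ ⟨X, -, rfl⟩
  exact S.Tr_mul_C_comm X x

lemma Tr_C_eq_zero_of_odd_count {W : List S.Λ} {i : S.Λ} (h : Odd (W.count i)) :
    S.Tr (S.C W) = 0 := by
  by_contra h0
  have hg := S.Tr_gauge (S.C W)
  rw [gauge_C, map_smul, smul_eq_mul, mul_eq_right₀ h0] at hg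
  have hc := S.Tr_c_mul_mul_c i (S.C W)
  rw [c_mul_C, smul_mul_assoc, mul_assoc, c_mul_self, mul_one, map_smul, smul_eq_mul,
    mul_eq_right₀ h0, pow_add, hg, one_mul, neg_one_pow_eq_one_iff_even (by norm_num)] at hc
  exact Nat.not_even_iff_odd.mpr h hc

lemma Tr_star_twist_mul_twist (p q : S.PIdx × S.PIdx) :
    S.Tr (star (S.twist (S.Θ (S.C p.1)) (S.C p.2)) * S.twist (S.Θ (S.C q.1)) (S.C q.2)) =
      if p = q then 1 else 0 := by
  obtain ⟨⟨J, hJ⟩, J', hJ'⟩ := p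
  obtain ⟨⟨K, hK⟩, K', hK'⟩ := q
  rw [S.twist_Θ_C (S.P_sub J hJ) (S.P_sub J' hJ'), S.twist_Θ_C (S.P_sub K hK) (S.P_sub K' hK'),
    star_smul, smul_mul_smul_comm, map_smul, smul_eq_mul]
  split_ifs with hpq
  · simp only [Prod.mk.injEq, Subtype.mk.injEq] at hpq
    obtain ⟨rfl, rfl⟩ := hpq
    rw [star_C_mul_C, Tr_one, mul_one, ← starRingEnd_apply, Complex.conj_mul', norm_pow,
      S.norm_ζ]
    simp
  · have hne : (J.map S.ϑ ++ J').toFinset ≠ (K.map S.ϑ ++ K').toFinset := fun h => hpq <| by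
      obtain ⟨rfl, rfl⟩ := S.eq_of_toFinset_map_append_eq hJ hJ' hK hK' h
      rfl
    obtain ⟨i, hi⟩ := not_forall.mp fun h => hne (Finset.ext h)
    simp only [List.mem_toFinset] at hi
    rw [star_C, ← C_append, S.Tr_C_eq_zero_of_odd_count (i := i)
      (List.odd_count_append_of_nodup (List.nodup_reverse.mpr (S.nodup_map_append hJ hJ'))
        (S.nodup_map_append hK hK') (by rwa [List.mem_reverse])), mul_zero]

def Θₗ : S.carrier →ₗ⋆[ℂ] S.carrier where
  toFun := S.Θ
  map_add' := S.Θ_add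
  map_smul' := S.Θ_smul

lemma Tr_Θ (x : S.carrier) : S.Tr (S.Θ x) = starRingEnd ℂ (S.Tr x) := by
  suffices S.Tr.comp S.Θₗ = (starLinearEquiv ℂ (A := ℂ)).toLinearMap.comp S.Tr from
    LinearMap.congr_fun this x
  refine LinearMap.ext_on S.span_C_nodup ?_
  rintro _ ⟨X, hX, rfl⟩
  change S.Tr (S.Θ (S.C X)) = starRingEnd ℂ (S.Tr (S.C X))
  rw [Θ_C, S.Tr_C_of_nodup hX, S.Tr_C_of_nodup (hX.map S.ϑ_invol.injective)]
  simp [apply_ite]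

lemma Θ_mem_Aplus {x : S.carrier} (hx : x ∈ S.Aminus) : S.Θ x ∈ S.Aplus := by
  induction hx using Algebra.adjoin_induction with
  | mem y hy =>
    obtain ⟨i, hi, rfl⟩ := hy
    rw [S.Θ_c]
    exact Algebra.subset_adjoin ⟨S.ϑ i, (S.ϑ_mem_Λp_iff i).mpr hi, rfl⟩
  | algebraMap z =>
    rw [Algebra.algebraMap_eq_smul_one, S.Θ_smul, S.Θ_one]
    exact Subalgebra.smul_mem _ (one_mem _) _
  | add y z _ _ hy hz => rw [S.Θ_add]; exact add_mem hy hz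
  | mul y z _ _ hy hz => rw [S.Θ_mul]; exact mul_mem hy hz

lemma mem_span_C_map_of_mem_Aminus {x : S.carrier} (hx : x ∈ S.Aminus) :
    x ∈ Submodule.span ℂ (Set.range fun J : S.PIdx => S.C (J.1.map S.ϑ)) := by
  have h := Submodule.apply_mem_span_image_of_mem_span S.Θₗ (S.plus_span _ (S.Θ_mem_Aplus hx))
  rw [← Set.range_comp] at h
  change S.Θ (S.Θ x) ∈ Submodule.span ℂ (Set.range fun J : S.PIdx => S.Θ (S.C J.1)) at h
  simpa only [S.Θ_invol, Θ_C] using h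

lemma Tr_C_map_mul_C {J J' : List S.Λ} (hJ : J ∈ S.P) (hJ' : J' ∈ S.P) :
    S.Tr (S.C (J.map S.ϑ) * S.C J') = S.Tr (S.C (J.map S.ϑ)) * S.Tr (S.C J') := by
  rw [← C_append, S.Tr_C_map_append hJ hJ',
    S.Tr_C_of_nodup ((S.P_nodup J hJ).map S.ϑ_invol.injective),
    S.Tr_C_of_nodup (S.P_nodup J' hJ')]
  split_ifs <;> simp_all

lemma Tr_mul_of_mem_Aminus_of_mem_Aplus {x y : S.carrier} (hx : x ∈ S.Aminus)
    (hy : y ∈ S.Aplus) : S.Tr (x * y) = S.Tr x * S.Tr y := by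
  have hC : ∀ J ∈ S.P, S.Tr (S.C (J.map S.ϑ) * y) = S.Tr (S.C (J.map S.ϑ)) * S.Tr y :=
    fun J hJ => LinearMap.eqOn_span' (f := S.Tr ∘ₗ LinearMap.mulLeft ℂ (S.C (J.map S.ϑ)))
      (g := S.Tr (S.C (J.map S.ϑ)) • S.Tr)
      (by rintro _ ⟨⟨J', hJ'⟩, rfl⟩; exact S.Tr_C_map_mul_C hJ hJ') (S.plus_span y hy)
  refine (LinearMap.eqOn_span' (f := S.Tr ∘ₗ LinearMap.mulRight ℂ y) (g := S.Tr y • S.Tr)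
    ?_ (S.mem_span_C_map_of_mem_Aminus hx)).trans (mul_comm _ _)
  rintro _ ⟨⟨J, hJ⟩, rfl⟩
  exact (hC J hJ).trans (mul_comm _ _)

end MajoranaSetting

/-- `Tr` is a tracial, factorizing, reflection-invariant state. -/
theorem trace_properties (S : MajoranaSetting) :
    (S.Tr 1 = 1) ∧
    (∀ A : S.carrier, 0 ≤ S.Tr (star A * A) ∧ (S.Tr (star A * A) = 0 → A = 0)) ∧
    (∀ A B : S.carrier, S.Tr (A * B) = S.Tr (B * A)) ∧
    (∀ A : S.carrier, S.Tr (S.Θ A) = starRingEnd ℂ (S.Tr A)) ∧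
    (∀ Am ∈ S.Aminus, ∀ Ap ∈ S.Aplus, S.Tr (Am * Ap) = S.Tr Am * S.Tr Ap) :=
  ⟨S.Tr_one,
    nonneg_and_faithful_of_orthonormal S.Tr _ S.basis_span S.Tr_star_twist_mul_twist,
    S.Tr_mul_comm, S.Tr_Θ, fun _ hx _ hy => S.Tr_mul_of_mem_Aminus_of_mem_Aplus hx hy⟩
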